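/- If n = 2r+1 and a ≥ 2 are positive integers, then ρ_2(K(n+2a, r+a)) ≥ 2^{⌊a/2⌋}·ρ_2(K(n,r)). -/

import Mathlib

open Finset

/-- The vertex set of the Kneser graph `K(n,r)`: the `r`-element subsets of `[n] = {1,…,n}`. -/
def KneserVerts (n r : ℕ) : Finset (Finset ℕ) := (Finset.Icc 1 n).powersetCard r

/-- Adjacency in a Kneser graph: distinct disjoint sets. -/
def KneserAdj (u v : Finset ℕ) : Prop := u ≠ v ∧ Disjoint u v

instance (u v : Finset ℕ) : Decidable (KneserAdj u v) := by
  unfold KneserAdj; infer_instance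

/-- `D` is a `k`-dominating set of `K(n,r)`: every vertex outside `D` has at least
`k` neighbours in `D`. -/
def IsKDomSet (n r k : ℕ) (D : Finset (Finset ℕ)) : Prop :=
  D ⊆ KneserVerts n r ∧
    ∀ v ∈ KneserVerts n r, v ∉ D → k ≤ (D.filter fun u => KneserAdj v u).card

/-- `D` is a `k`-tuple dominating set of `K(n,r)`: every vertex has at least `k`
vertices of `D` in its closed neighbourhood. -/
def IsKTupleDomSet (n r k : ℕ) (D : Finset (Finset ℕ)) : Prop :=
  D ⊆ KneserVerts n r ∧
    ∀ v ∈ KneserVerts n r, k ≤ (D.filter fun u => u = v ∨ KneserAdj v u).card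

/-- `D` is a `k`-tuple total dominating set of `K(n,r)`: every vertex has at least
`k` neighbours in `D`. -/
def IsKTupleTotalDomSet (n r k : ℕ) (D : Finset (Finset ℕ)) : Prop :=
  D ⊆ KneserVerts n r ∧
    ∀ v ∈ KneserVerts n r, k ≤ (D.filter fun u => KneserAdj v u).card

/-- The `k`-domination number `γ_k(K(n,r))`. -/
noncomputable def kdomNum (n r k : ℕ) : ℕ :=
  sInf {m | ∃ D, IsKDomSet n r k D ∧ D.card = m}

/-- The `k`-tuple domination number `γ_{×k}(K(n,r))`. -/
noncomputable def ktupleDomNum (n r k : ℕ) : ℕ :=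
  sInf {m | ∃ D, IsKTupleDomSet n r k D ∧ D.card = m}

/-- The `k`-tuple total domination number `γ_{×k,t}(K(n,r))`. -/
noncomputable def ktupleTotalDomNum (n r k : ℕ) : ℕ :=
  sInf {m | ∃ D, IsKTupleTotalDomSet n r k D ∧ D.card = m}

/-- `S` is a 2-packing of `K(n,r)`: any two distinct members are neither adjacent
nor have a common neighbour (i.e. are at distance at least 3). -/
def IsTwoPacking (n r : ℕ) (S : Finset (Finset ℕ)) : Prop :=
  S ⊆ KneserVerts n r ∧
    ∀ u ∈ S, ∀ v ∈ S, u ≠ v →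
      ¬ KneserAdj u v ∧ ∀ w ∈ KneserVerts n r, ¬ (KneserAdj u w ∧ KneserAdj w v)

/-- The 2-packing number `ρ₂(K(n,r))`. -/
noncomputable def twoPackingNum (n r : ℕ) : ℕ :=
  sSup {m | ∃ S, IsTwoPacking n r S ∧ S.card = m}

/-- A clique in a Kneser graph: a family of pairwise disjoint sets. -/
def IsKneserClique (D : Finset (Finset ℕ)) : Prop :=
  ∀ u ∈ D, ∀ v ∈ D, u ≠ v → Disjoint u v

/-!
In the odd graph `K(2k+1, k)` two distinct vertices are at distance at least 3 exactly when
they meet in at least one and at most `k - 2` points. So if `S` is a 2-packing of `K(2k+1, k)`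
and `E` is a family of `m`-subsets of `2m` new points meeting pairwise in at most `m - 2`
points, the sets `A ∪ T` (`A ∈ S`, `T ∈ E`) form a 2-packing of `K(2(k+m)+1, k+m)` of size
`|S| |E|`. Taking `E = {{x}}` shows that `ρ₂` does not decrease from `k` to `k + 1`, and
`E = {{x₁, x₂}, {x₃, x₄}}` that it at least doubles from `k` to `k + 2`; now use `⌊a/2⌋`
doublings and `a mod 2` single steps.
-/

section KneserTwoPacking

variable {n r : ℕ}

lemma mem_kneserVerts {A : Finset ℕ} : A ∈ KneserVerts n r ↔ A ⊆ Icc 1 n ∧ #A = r :=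
  mem_powersetCard

lemma not_kneserAdj_of_card_lt {u v w : Finset ℕ} (hw : w ∈ KneserVerts n r)
    (huv : u ∪ v ⊆ Icc 1 n) (hcard : n < r + #(u ∪ v)) :
    ¬ (KneserAdj u w ∧ KneserAdj w v) := by
  rintro ⟨⟨-, huw⟩, ⟨-, hwv⟩⟩
  obtain ⟨hw, hwr⟩ := mem_kneserVerts.mp hw
  have hdisj : Disjoint w (u ∪ v) := disjoint_union_right.mpr ⟨huw.symm, hwv⟩
  have := card_le_card (union_subset hw huv)
  rw [card_union_of_disjoint hdisj, Nat.card_Icc] at this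
  omega

lemma exists_kneserAdj_kneserAdj {u v : Finset ℕ} (hu : u.Nonempty) (hv : v.Nonempty)
    (huv : u ∪ v ⊆ Icc 1 n) (hcard : r + #(u ∪ v) ≤ n) :
    ∃ w ∈ KneserVerts n r, KneserAdj u w ∧ KneserAdj w v := by
  have hr : r ≤ #(Icc 1 n \ (u ∪ v)) := by
    rw [card_sdiff_of_subset huv, Nat.card_Icc]
    omega
  obtain ⟨w, hw, rfl⟩ := exists_subset_card_eq hr
  have huw : Disjoint u w :=
    disjoint_of_subset_right hw (disjoint_sdiff.mono_left subset_union_left)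
  have hwv : Disjoint w v :=
    disjoint_of_subset_left hw (disjoint_sdiff_self_left.mono_right subset_union_right)
  refine ⟨w, mem_kneserVerts.mpr ⟨hw.trans sdiff_subset, rfl⟩, ⟨?_, huw⟩, ⟨?_, hwv⟩⟩
  · rintro rfl
    exact hu.ne_empty (disjoint_self.mp huw)
  · rintro rfl
    exact hv.ne_empty (disjoint_self.mp hwv)

lemma isTwoPacking_odd_iff {k : ℕ} (hk : 1 ≤ k) {S : Finset (Finset ℕ)} :
    IsTwoPacking (2 * k + 1) k S ↔ S ⊆ KneserVerts (2 * k + 1) k ∧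
      ∀ u ∈ S, ∀ v ∈ S, u ≠ v → 0 < #(u ∩ v) ∧ #(u ∩ v) + 2 ≤ k := by
  refine and_congr_right fun hS => forall₂_congr fun u hu => forall₂_congr fun v hv =>
    imp_congr_right fun huv => ?_
  obtain ⟨hu, hur⟩ := mem_kneserVerts.mp (hS hu)
  obtain ⟨hv, hvr⟩ := mem_kneserVerts.mp (hS hv)
  have hunion := card_union_add_card_inter u v
  have hsub : u ∪ v ⊆ Icc 1 (2 * k + 1) := union_subset hu hv
  have hadj : ¬ KneserAdj u v ↔ 0 < #(u ∩ v) := by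
    simp [KneserAdj, huv, card_pos, not_disjoint_iff_nonempty_inter]
  rw [hadj]
  refine and_congr_right fun _ => ⟨fun h => ?_, fun h w hw => ?_⟩
  · by_contra hlt
    have hu0 : u.Nonempty := card_pos.mp (by omega : 0 < #u)
    have hv0 : v.Nonempty := card_pos.mp (by omega : 0 < #v)
    obtain ⟨w, hw, huw⟩ := exists_kneserAdj_kneserAdj (r := k) hu0 hv0 hsub (by omega)
    exact h w hw huw
  · exact not_kneserAdj_of_card_lt hw hsub (by omega)

lemma bddAbove_twoPacking_card (n r : ℕ) :
    BddAbove {m | ∃ S, IsTwoPacking n r S ∧ #S = m} :=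
  ⟨#(KneserVerts n r), by rintro _ ⟨S, hS, rfl⟩; exact card_le_card hS.1⟩

lemma card_le_twoPackingNum {S : Finset (Finset ℕ)} (hS : IsTwoPacking n r S) :
    #S ≤ twoPackingNum n r :=
  le_csSup (bddAbove_twoPacking_card n r) ⟨S, hS, rfl⟩

lemma exists_isTwoPacking_card_eq (n r : ℕ) :
    ∃ S, IsTwoPacking n r S ∧ #S = twoPackingNum n r :=
  Nat.sSup_mem (s := {m | ∃ S, IsTwoPacking n r S ∧ #S = m})
    ⟨0, ∅, ⟨empty_subset _, by simp⟩, rfl⟩ (bddAbove_twoPacking_card n r)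

end KneserTwoPacking

section DisjointUnion

variable {L A B T T' : Finset ℕ}

lemma union_inter_union_eq (hA : A ⊆ L) (hB : B ⊆ L) (hT : Disjoint T L)
    (hT' : Disjoint T' L) : (A ∪ T) ∩ (B ∪ T') = (A ∩ B) ∪ (T ∩ T') := by
  ext x
  have hxT : x ∈ T → x ∉ L := fun h => Finset.disjoint_left.mp hT h
  have hxT' : x ∈ T' → x ∉ L := fun h => Finset.disjoint_left.mp hT' h
  have hxA : x ∈ A → x ∈ L := fun h => hA h
  have hxB : x ∈ B → x ∈ L := fun h => hB h
  simp only [mem_union, mem_inter]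
  tauto

lemma card_union_inter_union (hA : A ⊆ L) (hB : B ⊆ L) (hT : Disjoint T L)
    (hT' : Disjoint T' L) : #((A ∪ T) ∩ (B ∪ T')) = #(A ∩ B) + #(T ∩ T') := by
  rw [union_inter_union_eq hA hB hT hT', card_union_of_disjoint]
  exact (hT.symm.mono_left (inter_subset_left.trans hA)).mono_right inter_subset_left

lemma eq_and_eq_of_union_eq_union (hA : A ⊆ L) (hB : B ⊆ L) (hT : Disjoint T L)
    (hT' : Disjoint T' L) (h : A ∪ T = B ∪ T') : A = B ∧ T = T' := by
  have hA' : (A ∪ T) ∩ L = A := by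
    rw [union_inter_distrib_right, inter_eq_left.mpr hA, disjoint_iff_inter_eq_empty.mp hT,
      union_empty]
  have hB' : (B ∪ T') ∩ L = B := by
    rw [union_inter_distrib_right, inter_eq_left.mpr hB, disjoint_iff_inter_eq_empty.mp hT',
      union_empty]
  have hAB : A = B := by rw [← hA', ← hB', h]
  subst hAB
  refine ⟨rfl, ?_⟩
  rw [← union_sdiff_cancel_left (hT.symm.mono_left hA), h,
    union_sdiff_cancel_left (hT'.symm.mono_left hA)]

end DisjointUnion

section Extension

variable {k m : ℕ} {S E : Finset (Finset ℕ)}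

lemma isTwoPacking_image₂_union (hk : 1 ≤ k) (hS : IsTwoPacking (2 * k + 1) k S)
    (hE : ∀ T ∈ E, T ⊆ Ioc (2 * k + 1) (2 * (k + m) + 1) ∧ #T = m)
    (hEinter : ∀ T ∈ E, ∀ T' ∈ E, T ≠ T' → #(T ∩ T') + 2 ≤ m) :
    IsTwoPacking (2 * (k + m) + 1) (k + m) (image₂ (· ∪ ·) S E) ∧
      #(image₂ (· ∪ ·) S E) = #S * #E := by
  obtain ⟨hSverts, hSinter⟩ := (isTwoPacking_odd_iff hk).mp hS
  have hA : ∀ A ∈ S, A ⊆ Icc 1 (2 * k + 1) ∧ #A = k :=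
    fun A hA => mem_kneserVerts.mp (hSverts hA)
  have hT : ∀ T ∈ E, Disjoint T (Icc 1 (2 * k + 1)) := fun T hT => by
    refine disjoint_of_subset_left (hE T hT).1 (Finset.disjoint_left.mpr fun x hx hx' => ?_)
    rw [mem_Ioc] at hx
    rw [mem_Icc] at hx'
    omega
  refine ⟨(isTwoPacking_odd_iff (by omega)).mpr ⟨?_, ?_⟩, ?_⟩
  · simp only [subset_iff, mem_image₂]
    rintro _ ⟨A, hAS, T, hTE, rfl⟩
    obtain ⟨hAsub, hAcard⟩ := hA A hAS
    obtain ⟨hTsub, hTcard⟩ := hE T hTE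
    refine mem_kneserVerts.mpr ⟨union_subset (hAsub.trans (Icc_subset_Icc_right (by omega)))
      (hTsub.trans fun x hx => ?_), ?_⟩
    · rw [mem_Ioc] at hx
      rw [mem_Icc]
      omega
    · rw [card_union_of_disjoint ((hT T hTE).symm.mono_left hAsub), hAcard, hTcard]
  · simp only [mem_image₂]
    rintro _ ⟨A, hAS, T, hTE, rfl⟩ _ ⟨B, hBS, T', hT'E, rfl⟩ hne
    rw [card_union_inter_union (hA A hAS).1 (hA B hBS).1 (hT T hTE) (hT T' hT'E)]
    by_cases hAB : A = B
    · subst hAB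
      have := hEinter T hTE T' hT'E fun h => hne (h ▸ rfl)
      rw [inter_self, (hA A hAS).2]
      omega
    · have := hSinter A hAS B hBS hAB
      have := card_le_card (inter_subset_left (s₁ := T) (s₂ := T'))
      have := (hE T hTE).2
      omega
  · refine card_image₂_iff.mpr fun p hp q hq hpq => ?_
    obtain ⟨hpS, hpE⟩ := hp
    obtain ⟨hqS, hqE⟩ := hq
    obtain ⟨h1, h2⟩ := eq_and_eq_of_union_eq_union (hA _ hpS).1 (hA _ hqS).1 (hT _ hpE)
      (hT _ hqE) hpq
    exact Prod.ext h1 h2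

lemma twoPackingNum_mul_card_le (hk : 1 ≤ k)
    (hE : ∀ T ∈ E, T ⊆ Ioc (2 * k + 1) (2 * (k + m) + 1) ∧ #T = m)
    (hEinter : ∀ T ∈ E, ∀ T' ∈ E, T ≠ T' → #(T ∩ T') + 2 ≤ m) :
    twoPackingNum (2 * k + 1) k * #E ≤ twoPackingNum (2 * (k + m) + 1) (k + m) := by
  obtain ⟨S, hS, hcard⟩ := exists_isTwoPacking_card_eq (2 * k + 1) k
  obtain ⟨hpacking, hcard'⟩ := isTwoPacking_image₂_union hk hS hE hEinter
  rw [← hcard, ← hcard']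
  exact card_le_twoPackingNum hpacking

end Extension

lemma twoPackingNum_le_succ {k : ℕ} (hk : 1 ≤ k) :
    twoPackingNum (2 * k + 1) k ≤ twoPackingNum (2 * (k + 1) + 1) (k + 1) := by
  simpa using twoPackingNum_mul_card_le (E := {{2 * k + 2}}) hk
    (by simp [subset_iff]) (by simp)

lemma two_mul_twoPackingNum_le {k : ℕ} (hk : 1 ≤ k) :
    2 * twoPackingNum (2 * k + 1) k ≤ twoPackingNum (2 * (k + 2) + 1) (k + 2) := by
  have hdisj : Icc (2 * k + 2) (2 * k + 3) ∩ Icc (2 * k + 4) (2 * k + 5) = ∅ := by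
    ext x
    simp only [mem_inter, mem_Icc, notMem_empty, iff_false]
    omega
  have hne : Icc (2 * k + 2) (2 * k + 3) ≠ Icc (2 * k + 4) (2 * k + 5) := fun h => by
    rw [h, inter_self] at hdisj
    simp at hdisj
  have hE : ∀ T ∈ ({Icc (2 * k + 2) (2 * k + 3), Icc (2 * k + 4) (2 * k + 5)} : Finset _),
      T ⊆ Ioc (2 * k + 1) (2 * (k + 2) + 1) ∧ #T = 2 := by
    simp only [mem_insert, mem_singleton]
    rintro T (rfl | rfl) <;> refine ⟨fun x hx => ?_, by simp⟩ <;>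
      simp only [mem_Icc, mem_Ioc] at hx ⊢ <;> omega
  have := twoPackingNum_mul_card_le hk hE
    (by simp [hdisj, inter_comm (Icc (2 * k + 4) (2 * k + 5))])
  rwa [card_pair hne, mul_comm] at this

lemma twoPackingNum_le_add {k : ℕ} (hk : 1 ≤ k) (j : ℕ) :
    twoPackingNum (2 * k + 1) k ≤ twoPackingNum (2 * (k + j) + 1) (k + j) := by
  induction j with
  | zero => rfl
  | succ j ih => exact ih.trans (twoPackingNum_le_succ (by omega))

lemma two_pow_mul_twoPackingNum_le {k : ℕ} (hk : 1 ≤ k) (b : ℕ) :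
    2 ^ b * twoPackingNum (2 * k + 1) k ≤
      twoPackingNum (2 * (k + 2 * b) + 1) (k + 2 * b) := by
  induction b with
  | zero => simp
  | succ b ih =>
    calc 2 ^ (b + 1) * twoPackingNum (2 * k + 1) k
        ≤ 2 * twoPackingNum (2 * (k + 2 * b) + 1) (k + 2 * b) := by
          rw [pow_succ', mul_assoc]; exact Nat.mul_le_mul_left 2 ih
      _ ≤ twoPackingNum (2 * (k + 2 * (b + 1)) + 1) (k + 2 * (b + 1)) :=
          two_mul_twoPackingNum_le (by omega)

theorem stmt_12_general (r a : ℕ) (hr : 1 ≤ r) :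
    2 ^ (a / 2) * twoPackingNum (2 * r + 1) r ≤
      twoPackingNum (2 * r + 1 + 2 * a) (r + a) :=
  calc 2 ^ (a / 2) * twoPackingNum (2 * r + 1) r
      ≤ twoPackingNum (2 * (r + 2 * (a / 2)) + 1) (r + 2 * (a / 2)) :=
        two_pow_mul_twoPackingNum_le hr (a / 2)
    _ ≤ twoPackingNum (2 * (r + 2 * (a / 2) + a % 2) + 1) (r + 2 * (a / 2) + a % 2) :=
        twoPackingNum_le_add (by omega) (a % 2)
    _ = twoPackingNum (2 * r + 1 + 2 * a) (r + a) := by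
        congr 1 <;> omega

theorem stmt_12 (r a : ℕ) (hr : 1 ≤ r) (ha : 2 ≤ a) :
    2 ^ (a / 2) * twoPackingNum (2 * r + 1) r ≤
      twoPackingNum (2 * r + 1 + 2 * a) (r + a) :=
  stmt_12_general r a hr
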